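/- (Uniform V-cycle convergence, main theorem.) Let E be a finite-dimensional real inner product space and let V_0 ⊆ V_1 ⊆ ⋯ ⊆ V_K be a chain of subspaces of E. For each 1 ≤ k ≤ K, let R_k : V_k → V_k be linear, self-adjoint with respect to the restricted inner product, and satisfy 0 ≤ ⟪R_k v, v⟫ ≤ ⟪v, v⟫ for all v ∈ V_k; let P_k : V_k → V_{k-1} be the orthogonal projection of V_k onto V_{k-1} and ι_k : V_{k-1} → V_k the inclusion. Fix an integer m ≥ 1 and a constant C > 0, and assume the approximation property ⟪v − ι_k P_k v, v − ι_k P_k v⟫ ≤ C · ⟪(Id − R_k) v, v⟫ for all v ∈ V_k and all 1 ≤ k ≤ K. Define E_0 := 0 on V_0 and, recursively, E_k := R_k^m ∘ (Id_{V_k} − ι_k ∘ P_k + ι_k ∘ E_{k-1} ∘ P_k) ∘ R_k^m on V_k. Then for every 0 ≤ k ≤ K and every w ∈ V_k, ‖E_k w‖ ≤ (C/(C + 2m)) · ‖w‖, where ‖·‖ is the norm induced by the inner product. In particular the contraction number of the V-cycle is bounded by C/(C+2m) < 1, uniformly in the number of levels. -/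

import Mathlib

/-!
Write `δ = C / (C + 2m)`. By induction on the level, every `E_k` is positive semidefinite with
`⟪E_k w, w⟫ ≤ δ ‖w‖²`; for positive symmetric operators this quadratic-form bound is the norm
bound, by Cauchy–Schwarz for the form `⟪E_k ·, ·⟫`.

For the inductive step put `v = R^m w`. Pythagoras for the orthogonal projection and the bound on
`E_{k-1}` give `⟪E_k w, w⟫ ≤ (1 - δ) ‖v - ι P v‖² + δ ‖v‖²`, and the approximation property
together with `(1 - δ) C = 2m δ` turns this into `δ ((2m + 1) ‖v‖² - 2m ⟪R v, v⟫)`. Since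
`R ≥ 0`, the sequence `n ↦ ⟪R^n w, w⟫` has nonnegative second differences
`⟪R^n (w - R w), w - R w⟫`, and convexity of a sequence on `[0, 2m + 1]` gives
`(2m + 1) ⟪R^{2m} w, w⟫ ≤ ⟪w, w⟫ + 2m ⟪R^{2m+1} w, w⟫`.
-/

open RealInnerProductSpace

lemma sub_apply_zero_le_mul_of_monotone_diff {a : ℕ → ℝ}
    (h : Monotone fun k => a (k + 1) - a k) (n : ℕ) :
    a n - a 0 ≤ n * (a (n + 1) - a n) := by
  calc a n - a 0 = ∑ k ∈ Finset.range n, (a (k + 1) - a k) := (Finset.sum_range_sub a n).symm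
    _ ≤ ∑ _k ∈ Finset.range n, (a (n + 1) - a n) :=
        Finset.sum_le_sum fun k hk => h (Finset.mem_range.mp hk).le
    _ = n * (a (n + 1) - a n) := by rw [Finset.sum_const, Finset.card_range, nsmul_eq_mul]

namespace LinearMap

variable {F : Type*} [NormedAddCommGroup F] [InnerProductSpace ℝ F]

lemma IsPositive.conj_isSymmetric {S T : F →ₗ[ℝ] F} (hT : T.IsPositive) (hS : S.IsSymmetric) :
    (S * T * S).IsPositive := by
  refine (isPositive_iff _).mpr ⟨fun u v => ?_, fun w => ?_⟩
  · simp only [Module.End.mul_apply, hS _ v, hT.isSymmetric _ (S v), hS u]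
  · simpa only [Module.End.mul_apply, hS _ w] using hT.inner_nonneg_left (S w)

lemma IsPositive.pow {A : F →ₗ[ℝ] F} (hA : A.IsPositive) (n : ℕ) : (A ^ n).IsPositive := by
  obtain ⟨k, rfl | rfl⟩ := Nat.even_or_odd' n
  · simpa only [two_mul, pow_add, mul_one] using
      isPositive_one.conj_isSymmetric (hA.isSymmetric.pow k)
  · simpa only [pow_succ, two_mul, pow_add, mul_assoc, (Commute.self_pow A k).eq] using
      hA.conj_isSymmetric (hA.isSymmetric.pow k)

lemma IsSymmetric.inner_pow_second_diff {A : F →ₗ[ℝ] F} (hA : A.IsSymmetric) (n : ℕ) (w : F) :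
    ⟪(A ^ n) w, w⟫ - 2 * ⟪(A ^ (n + 1)) w, w⟫ + ⟪(A ^ (n + 2)) w, w⟫
      = ⟪(A ^ n) (w - A w), w - A w⟫ := by
  have shift : ∀ k, ⟪(A ^ k) w, A w⟫ = ⟪(A ^ (k + 1)) w, w⟫ := fun k => by
    rw [← hA, pow_succ', Module.End.mul_apply]
  have hpow : (A ^ n) (A w) = (A ^ (n + 1)) w := by rw [pow_succ, Module.End.mul_apply]
  rw [map_sub, hpow, inner_sub_left, inner_sub_right, inner_sub_right, shift, shift,
    show n + 1 + 1 = n + 2 from rfl]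
  ring

lemma IsPositive.mul_norm_pow_apply_sq_le {A : F →ₗ[ℝ] F} (hA : A.IsPositive) (m : ℕ) (w : F) :
    (2 * m + 1) * ‖(A ^ m) w‖ ^ 2 ≤ ‖w‖ ^ 2 + 2 * m * ⟪A ((A ^ m) w), (A ^ m) w⟫ := by
  have convex : Monotone fun k => ⟪(A ^ (k + 1)) w, w⟫ - ⟪(A ^ k) w, w⟫ :=
    monotone_nat_of_le_succ fun k => by
      have := hA.isSymmetric.inner_pow_second_diff k w
      have := (hA.pow k).inner_nonneg_left (w - A w)
      linarith
  have h0 : ⟪(A ^ 0) w, w⟫ = ‖w‖ ^ 2 := by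
    rw [pow_zero, Module.End.one_apply, real_inner_self_eq_norm_sq]
  have h2m : ⟪(A ^ (2 * m)) w, w⟫ = ‖(A ^ m) w‖ ^ 2 := by
    rw [two_mul, pow_add, Module.End.mul_apply, hA.isSymmetric.pow m, real_inner_self_eq_norm_sq]
  have h2m1 : ⟪(A ^ (2 * m + 1)) w, w⟫ = ⟪A ((A ^ m) w), (A ^ m) w⟫ := by
    rw [two_mul, add_assoc, pow_add, Module.End.mul_apply, hA.isSymmetric.pow m, pow_succ',
      Module.End.mul_apply]
  have := sub_apply_zero_le_mul_of_monotone_diff (a := fun n => ⟪(A ^ n) w, w⟫) convex (2 * m)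
  rw [h0, h2m, h2m1] at this
  push_cast at this
  linarith

lemma IsPositive.norm_apply_le {T : F →ₗ[ℝ] F} (hT : T.IsPositive) {δ : ℝ} (hδ : 0 ≤ δ)
    (hle : ∀ x, ⟪T x, x⟫ ≤ δ * ‖x‖ ^ 2) (x : F) : ‖T x‖ ≤ δ * ‖x‖ := by
  have cauchySchwarz := BilinForm.apply_mul_apply_le_of_forall_zero_le ((innerₗ F).comp T)
    hT.inner_nonneg_left x (T x)
  simp only [comp_apply, innerₗ_apply_apply, hT.isSymmetric (T x) x,
    real_inner_self_eq_norm_sq] at cauchySchwarz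
  have h4 : ‖T x‖ ^ 2 * ‖T x‖ ^ 2 ≤ (δ * ‖x‖) ^ 2 * ‖T x‖ ^ 2 := by
    calc ‖T x‖ ^ 2 * ‖T x‖ ^ 2 ≤ ⟪T x, x⟫ * ⟪T (T x), T x⟫ := cauchySchwarz
      _ ≤ (δ * ‖x‖ ^ 2) * (δ * ‖T x‖ ^ 2) :=
        mul_le_mul (hle x) (hle (T x)) (hT.inner_nonneg_left _)
          (mul_nonneg hδ (sq_nonneg _))
      _ = (δ * ‖x‖) ^ 2 * ‖T x‖ ^ 2 := by ring
  rcases (norm_nonneg (T x)).eq_or_lt with h | h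
  · rw [← h]
    positivity
  · have hsq : ‖T x‖ ^ 2 ≤ (δ * ‖x‖) ^ 2 := le_of_mul_le_mul_right h4 (by positivity)
    exact (pow_le_pow_iff_left₀ (norm_nonneg _) (by positivity) two_ne_zero).mp hsq

end LinearMap

section TwoGrid

variable {G W : Type*} [NormedAddCommGroup G] [InnerProductSpace ℝ G]
  [NormedAddCommGroup W] [InnerProductSpace ℝ W]

/-- The paper's `I - ι P + ι E P`, with `j = ι` and `Q = P`. -/
def coarseCorrection (j : W →ₗᵢ[ℝ] G) (Q : G →ₗ[ℝ] W) (Ek : W →ₗ[ℝ] W) : G →ₗ[ℝ] G :=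
  LinearMap.id - j.toLinearMap ∘ₗ Q + j.toLinearMap ∘ₗ Ek ∘ₗ Q

variable {j : W →ₗᵢ[ℝ] G} {Q : G →ₗ[ℝ] W}

lemma inner_map_eq_inner_proj (horth : ∀ v x, ⟪v - j (Q v), j x⟫ = 0) (x : W) (v : G) :
    ⟪j x, v⟫ = ⟪x, Q v⟫ := by
  have := horth v x
  rw [inner_sub_left, j.inner_map_map, sub_eq_zero] at this
  rw [real_inner_comm, this]
  exact real_inner_comm _ _

lemma norm_sq_eq_norm_sq_sub_proj_add (horth : ∀ v x, ⟪v - j (Q v), j x⟫ = 0) (v : G) :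
    ‖v‖ ^ 2 = ‖v - j (Q v)‖ ^ 2 + ‖Q v‖ ^ 2 := by
  have := norm_add_sq_real (v - j (Q v)) (j (Q v))
  rwa [sub_add_cancel, horth, j.norm_map, mul_zero, add_zero] at this

lemma inner_coarseCorrection_apply (horth : ∀ v x, ⟪v - j (Q v), j x⟫ = 0) (Ek : W →ₗ[ℝ] W)
    (u v : G) :
    ⟪coarseCorrection j Q Ek u, v⟫ = ⟪u - j (Q u), v - j (Q v)⟫ + ⟪Ek (Q u), Q v⟫ := by
  have residual : ⟪u - j (Q u), v⟫ = ⟪u - j (Q u), v - j (Q v)⟫ := by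
    rw [inner_sub_right _ v, horth, sub_zero]
  simp only [coarseCorrection, LinearMap.add_apply, LinearMap.sub_apply, LinearMap.id_apply,
    LinearMap.comp_apply, LinearIsometry.coe_toLinearMap]
  rw [inner_add_left, residual, inner_map_eq_inner_proj horth]

lemma isPositive_coarseCorrection (horth : ∀ v x, ⟪v - j (Q v), j x⟫ = 0) {Ek : W →ₗ[ℝ] W}
    (hE : Ek.IsPositive) : (coarseCorrection j Q Ek).IsPositive := by
  refine (LinearMap.isPositive_iff _).mpr ⟨fun u v => ?_, fun v => ?_⟩
  · rw [← real_inner_comm u, inner_coarseCorrection_apply horth, inner_coarseCorrection_apply horth,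
      hE.isSymmetric (Q u), real_inner_comm (u - j (Q u)), real_inner_comm (Q u)]
  · rw [inner_coarseCorrection_apply horth]
    exact add_nonneg real_inner_self_nonneg (hE.inner_nonneg_left _)

lemma inner_coarseCorrection_self_le (horth : ∀ v x, ⟪v - j (Q v), j x⟫ = 0)
    {Ek : W →ₗ[ℝ] W} {δ : ℝ} (hE : ∀ x, ⟪Ek x, x⟫ ≤ δ * ‖x‖ ^ 2) (v : G) :
    ⟪coarseCorrection j Q Ek v, v⟫ ≤ (1 - δ) * ‖v - j (Q v)‖ ^ 2 + δ * ‖v‖ ^ 2 := by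
  rw [inner_coarseCorrection_apply horth, real_inner_self_eq_norm_sq,
    norm_sq_eq_norm_sq_sub_proj_add horth v]
  linarith [hE (Q v)]

lemma inner_smoothed_coarseCorrection_le (horth : ∀ v x, ⟪v - j (Q v), j x⟫ = 0)
    {A : G →ₗ[ℝ] G} (hA : A.IsPositive) {m : ℕ} {C : ℝ} (hC : 0 < C)
    (happrox : ∀ v, ‖v - j (Q v)‖ ^ 2 ≤ C * ⟪((LinearMap.id : G →ₗ[ℝ] G) - A) v, v⟫)
    {Ek : W →ₗ[ℝ] W} (hE : ∀ x, ⟪Ek x, x⟫ ≤ C / (C + 2 * m) * ‖x‖ ^ 2) (w : G) :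
    ⟪(A ^ m * coarseCorrection j Q Ek * A ^ m) w, w⟫ ≤ C / (C + 2 * m) * ‖w‖ ^ 2 := by
  set δ := C / (C + 2 * m) with hδ
  have hD : 0 < C + 2 * m := by positivity
  have hδ0 : 0 ≤ δ := by positivity
  have hδ1 : δ ≤ 1 := (div_le_one hD).mpr (by linarith [(Nat.cast_nonneg m : (0 : ℝ) ≤ m)])
  have hδC : (1 - δ) * C = 2 * m * δ := by
    rw [hδ]
    field_simp
    ring
  set v := (A ^ m) w
  have happ := happrox v
  rw [LinearMap.sub_apply, LinearMap.id_apply, inner_sub_left, real_inner_self_eq_norm_sq] at happ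
  calc ⟪(A ^ m * coarseCorrection j Q Ek * A ^ m) w, w⟫ = ⟪coarseCorrection j Q Ek v, v⟫ := by
        rw [Module.End.mul_apply, Module.End.mul_apply, hA.isSymmetric.pow m]
    _ ≤ (1 - δ) * ‖v - j (Q v)‖ ^ 2 + δ * ‖v‖ ^ 2 :=
        inner_coarseCorrection_self_le horth hE v
    _ ≤ (1 - δ) * (C * (‖v‖ ^ 2 - ⟪A v, v⟫)) + δ * ‖v‖ ^ 2 := by gcongr
    _ = δ * ((2 * m + 1) * ‖v‖ ^ 2 - 2 * m * ⟪A v, v⟫) := by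
        linear_combination (‖v‖ ^ 2 - ⟪A v, v⟫) * hδC
    _ ≤ δ * ‖w‖ ^ 2 := by gcongr; linarith [hA.mul_norm_pow_apply_sq_le m w]

end TwoGrid

theorem vcycle_uniform_convergence_general
    {E : Type*} [NormedAddCommGroup E] [InnerProductSpace ℝ E]
    (K : ℕ) (V : ℕ → Submodule ℝ E) (hmono : ∀ k, V k ≤ V (k + 1))
    (R : ∀ k, V k →ₗ[ℝ] V k)
    (hsym : ∀ k, 1 ≤ k → k ≤ K → ∀ u v : V k, ⟪R k u, v⟫ = ⟪u, R k v⟫)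
    (hR0 : ∀ k, 1 ≤ k → k ≤ K → ∀ v : V k, 0 ≤ ⟪R k v, v⟫)
    (P : ∀ k, V (k + 1) →ₗ[ℝ] V k)
    (hP : ∀ k, k + 1 ≤ K → ∀ v : V (k + 1), ∀ w : V k,
      ⟪v - Submodule.inclusion (hmono k) (P k v), Submodule.inclusion (hmono k) w⟫ = 0)
    (m : ℕ) (C : ℝ) (hC : 0 < C)
    (happrox : ∀ k, k + 1 ≤ K → ∀ v : V (k + 1),
      ⟪v - Submodule.inclusion (hmono k) (P k v), v - Submodule.inclusion (hmono k) (P k v)⟫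
        ≤ C * ⟪((LinearMap.id : V (k + 1) →ₗ[ℝ] V (k + 1)) - R (k + 1)) v, v⟫)
    (Err : ∀ k, V k →ₗ[ℝ] V k)
    (hErr0 : Err 0 = 0)
    (hErrRec : ∀ k, k + 1 ≤ K →
      Err (k + 1) = R (k + 1) ^ m *
        ((LinearMap.id : V (k + 1) →ₗ[ℝ] V (k + 1))
          - (Submodule.inclusion (hmono k)).comp (P k)
          + (Submodule.inclusion (hmono k)).comp ((Err k).comp (P k))) *
        R (k + 1) ^ m) :
    ∀ k ≤ K, ∀ w : V k, ‖Err k w‖ ≤ (C / (C + 2 * (m : ℝ))) * ‖w‖ := by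
  have hδ : 0 ≤ C / (C + 2 * (m : ℝ)) := by positivity
  have level : ∀ k ≤ K, (Err k).IsPositive ∧
      ∀ w, ⟪Err k w, w⟫ ≤ C / (C + 2 * (m : ℝ)) * ‖w‖ ^ 2 := by
    intro k
    induction k with
    | zero => exact fun _ => ⟨hErr0 ▸ LinearMap.isPositive_zero, fun w => by
      rw [hErr0, LinearMap.zero_apply, inner_zero_left]; positivity⟩
    | succ k ih =>
      intro hk
      obtain ⟨hpos, hle⟩ := ih (by omega)
      let ι : V k →ₗᵢ[ℝ] V (k + 1) :=
        (Submodule.inclusion (hmono k)).isometryOfInner fun _ _ => rfl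
      have hR : (R (k + 1)).IsPositive :=
        (LinearMap.isPositive_iff _).mpr ⟨hsym _ (by omega) hk, hR0 _ (by omega) hk⟩
      rw [hErrRec k hk]
      exact ⟨(isPositive_coarseCorrection (j := ι) (hP k hk) hpos).conj_isSymmetric
          (hR.isSymmetric.pow m),
        inner_smoothed_coarseCorrection_le (j := ι) (hP k hk) hR hC
          (fun v => by rw [← real_inner_self_eq_norm_sq]; exact happrox k hk v) hle⟩
  intro k hk
  exact (level k hk).1.norm_apply_le hδ (level k hk).2

/-- Uniform V-cycle convergence (main theorem).  For a chain of subspaces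
`V 0 ≤ V 1 ≤ ⋯ ≤ V K` with self-adjoint smoothing error operators `R k` satisfying
`0 ≤ R k ≤ I`, orthogonal projections `P k : V (k+1) → V k` satisfying the approximation
property, and the symmetric V-cycle recursion with `m ≥ 1` smoothing steps, the error
propagation operators contract uniformly: `‖Err k w‖ ≤ (C/(C + 2m)) ‖w‖`. -/
theorem vcycle_uniform_convergence
    {E : Type*} [NormedAddCommGroup E] [InnerProductSpace ℝ E] [FiniteDimensional ℝ E]
    (K : ℕ) (V : ℕ → Submodule ℝ E) (hmono : ∀ k, V k ≤ V (k + 1))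
    (R : ∀ k, V k →ₗ[ℝ] V k)
    (hsym : ∀ k, 1 ≤ k → k ≤ K → ∀ u v : V k, ⟪R k u, v⟫ = ⟪u, R k v⟫)
    (hR0 : ∀ k, 1 ≤ k → k ≤ K → ∀ v : V k, 0 ≤ ⟪R k v, v⟫)
    (hR1 : ∀ k, 1 ≤ k → k ≤ K → ∀ v : V k, ⟪R k v, v⟫ ≤ ⟪v, v⟫)
    (P : ∀ k, V (k + 1) →ₗ[ℝ] V k)
    (hP : ∀ k, k + 1 ≤ K → ∀ v : V (k + 1), ∀ w : V k,
      ⟪v - Submodule.inclusion (hmono k) (P k v), Submodule.inclusion (hmono k) w⟫ = 0)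
    (m : ℕ) (hm : 1 ≤ m) (C : ℝ) (hC : 0 < C)
    (happrox : ∀ k, k + 1 ≤ K → ∀ v : V (k + 1),
      ⟪v - Submodule.inclusion (hmono k) (P k v), v - Submodule.inclusion (hmono k) (P k v)⟫
        ≤ C * ⟪((LinearMap.id : V (k + 1) →ₗ[ℝ] V (k + 1)) - R (k + 1)) v, v⟫)
    (Err : ∀ k, V k →ₗ[ℝ] V k)
    (hErr0 : Err 0 = 0)
    (hErrRec : ∀ k, k + 1 ≤ K →
      Err (k + 1) = R (k + 1) ^ m *
        ((LinearMap.id : V (k + 1) →ₗ[ℝ] V (k + 1))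
          - (Submodule.inclusion (hmono k)).comp (P k)
          + (Submodule.inclusion (hmono k)).comp ((Err k).comp (P k))) *
        R (k + 1) ^ m) :
    ∀ k ≤ K, ∀ w : V k, ‖Err k w‖ ≤ (C / (C + 2 * (m : ℝ))) * ‖w‖ :=
  vcycle_uniform_convergence_general K V hmono R hsym hR0 P hP m C hC happrox Err hErr0 hErrRec
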